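/- (Main theorem: return gap between the true environment and the learned world model.) Let γ ∈ [0,1), let μ₀ be a probability distribution on S, let T and T̂ be transition kernels from S × A to S (the true dynamics and the learned model dynamics), let R and R̂ be reward kernels with values in a finite set 𝓡 ⊂ ℝ satisfying |ρ| ≤ r_max, with mean rewards r(s,a) = ∑_{ρ} ρ·R(ρ|s,a) and r̂(s,a) = ∑_{ρ} ρ·R̂(ρ|s,a), and let π (the evaluating policy) and π_D (the behavior policy) be policies on (S, A). For a transition kernel and a policy, let the occupancies from μ₀ be defined recursively as usual, and define J(π) = ∑_{t=0}^∞ γ^t ∑_{s,a} P_t^{T,π}(s,a)·r(s,a) and Ĵ(π) = ∑_{t=0}^∞ γ^t ∑_{s,a} P_t^{T̂,π}(s,a)·r̂(s,a). Suppose: (i) for every t ≥ 0, ∑_{s,a} P_t^{T,π_D}(s,a)·D_TV(R(·|s,a) ‖ R̂(·|s,a)) ≤ ε_r; (ii) for every t ≥ 0, ∑_{s,a} P_t^{T,π_D}(s,a)·D_TV(T(·|s,a) ‖ T̂(·|s,a)) ≤ ε_m; (iii) max_{s∈S} D_TV(π(·|s) ‖ π_D(·|s)) ≤ ε_π. Then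 J(π) ≥ Ĵ(π) − 2·r_max·((ε_r + 2·ε_π)/(1−γ) + γ·(2·ε_π + ε_m)/(1−γ)²). -/

import Mathlib

/-!
Compare the two returns time step by time step, passing through the occupancy of the behaviour
policy in the true environment. Swapping π for π_D moves the time-`t` occupancy by at most
`(t + 1) ε_π` in total variation, since each step adds one policy error on top of the previous
ones; swapping T̂ for T under π_D moves it by at most `t ε_m`, since each step adds the model
error averaged over the behaviour occupancy; swapping the rewards costs `2 r_max ε_r`. So the
time-`t` returns differ by at most `2 r_max ((ε_r + 2 ε_π) + (2 ε_π + ε_m) t)`, and summing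
against `γ ^ t` gives the bound.
-/

open Finset

/-- Total-variation distance between two functions on a finite type. -/
noncomputable def tv {X : Type*} [Fintype X] (p q : X → ℝ) : ℝ :=
  (1 / 2) * ∑ x, |p x - q x|

/-- Total-variation distance between two functions restricted to a finite set. -/
noncomputable def tvOn {X : Type*} (F : Finset X) (p q : X → ℝ) : ℝ :=
  (1 / 2) * ∑ x ∈ F, |p x - q x|

/-- The state-action occupancy at time `t` from initial state distribution `μ0`, under
policy `π` and transition kernel `T`. -/
noncomputable def occ {S A : Type*} [Fintype S] [Fintype A]
    (μ0 : S → ℝ) (π : S → A → ℝ) (T : S × A → S → ℝ) : ℕ → S × A → ℝ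
  | 0, sa => μ0 sa.1 * π sa.1 sa.2
  | t + 1, x => ∑ sa : S × A, occ μ0 π T t sa * T sa x.1 * π x.1 x.2

def IsStochastic {X Y : Type*} [Fintype Y] (K : X → Y → ℝ) : Prop :=
  ∀ x, (∀ y, 0 ≤ K x y) ∧ ∑ y, K x y = 1

namespace IsStochastic

variable {X Y : Type*} [Fintype Y] {K : X → Y → ℝ}

lemma nonneg (hK : IsStochastic K) : 0 ≤ K := fun x => (hK x).1

lemma sum_eq_one (hK : IsStochastic K) (x : X) : ∑ y, K x y = 1 := (hK x).2

end IsStochastic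

section Expectation

variable {X : Type*} {F : Finset X} {p q f : X → ℝ} {C : ℝ}

lemma sum_mul_le_of_le (hp₀ : ∀ x ∈ F, 0 ≤ p x) (hp₁ : ∑ x ∈ F, p x = 1)
    (hf : ∀ x ∈ F, f x ≤ C) : ∑ x ∈ F, p x * f x ≤ C :=
  calc ∑ x ∈ F, p x * f x ≤ ∑ x ∈ F, p x * C :=
        sum_le_sum fun x hx => mul_le_mul_of_nonneg_left (hf x hx) (hp₀ x hx)
    _ = C := by rw [← sum_mul, hp₁, one_mul]

lemma abs_sum_mul_le (hp₀ : ∀ x ∈ F, 0 ≤ p x) (hp₁ : ∑ x ∈ F, p x = 1)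
    (hf : ∀ x ∈ F, |f x| ≤ C) : |∑ x ∈ F, p x * f x| ≤ C :=
  calc |∑ x ∈ F, p x * f x| ≤ ∑ x ∈ F, p x * |f x| := by
        refine (abs_sum_le_sum_abs _ _).trans_eq (sum_congr rfl fun x hx => ?_)
        rw [abs_mul, abs_of_nonneg (hp₀ x hx)]
    _ ≤ C := sum_mul_le_of_le hp₀ hp₁ hf

lemma abs_sum_mul_sub_sum_mul_le (hf : ∀ x ∈ F, |f x| ≤ C) :
    |∑ x ∈ F, p x * f x - ∑ x ∈ F, q x * f x| ≤ 2 * C * tvOn F p q :=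
  calc |∑ x ∈ F, p x * f x - ∑ x ∈ F, q x * f x| ≤ ∑ x ∈ F, |p x - q x| * |f x| := by
        rw [← sum_sub_distrib]
        refine (abs_sum_le_sum_abs _ _).trans_eq (sum_congr rfl fun x _ => ?_)
        rw [← sub_mul, abs_mul]
    _ ≤ ∑ x ∈ F, |p x - q x| * C :=
        sum_le_sum fun x hx => mul_le_mul_of_nonneg_left (hf x hx) (abs_nonneg _)
    _ = 2 * C * tvOn F p q := by rw [tvOn, ← sum_mul]; ring

end Expectation

section Mean

variable {F : Finset ℝ} {p q : ℝ → ℝ} {C : ℝ}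

lemma abs_mean_le (hF : ∀ ρ ∈ F, |ρ| ≤ C) (hp₀ : ∀ ρ ∈ F, 0 ≤ p ρ)
    (hp₁ : ∑ ρ ∈ F, p ρ = 1) : |∑ ρ ∈ F, ρ * p ρ| ≤ C := by
  simpa only [mul_comm] using abs_sum_mul_le hp₀ hp₁ hF

lemma abs_mean_sub_mean_le (hF : ∀ ρ ∈ F, |ρ| ≤ C) :
    |∑ ρ ∈ F, ρ * p ρ - ∑ ρ ∈ F, ρ * q ρ| ≤ 2 * C * tvOn F p q := by
  simpa only [mul_comm] using abs_sum_mul_sub_sum_mul_le (p := p) (q := q) hF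

end Mean

section TotalVariation

variable {X Y : Type*} [Fintype X] [Fintype Y]

lemma tvOn_univ (p q : X → ℝ) : tvOn univ p q = tv p q := rfl

lemma tv_self (p : X → ℝ) : tv p p = 0 := by simp [tv]

lemma tv_joint_of_marginal_eq {p : X → ℝ} (hp : 0 ≤ p) (κ κ' : X → Y → ℝ) :
    tv (fun z : X × Y => p z.1 * κ z.1 z.2) (fun z => p z.1 * κ' z.1 z.2)
      = ∑ x, p x * tv (κ x) (κ' x) := by
  simp only [tv, Fintype.sum_prod_type, ← mul_sub, abs_mul, abs_of_nonneg (hp _),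
    mul_sum]
  exact sum_congr rfl fun x _ => sum_congr rfl fun y _ => by ring

lemma tv_joint_of_kernel_eq {κ : X → Y → ℝ} (hκ : IsStochastic κ) (p q : X → ℝ) :
    tv (fun z : X × Y => p z.1 * κ z.1 z.2) (fun z => q z.1 * κ z.1 z.2) = tv p q := by
  simp only [tv, Fintype.sum_prod_type, ← sub_mul, abs_mul, abs_of_nonneg (hκ.nonneg _ _),
    ← mul_sum, hκ.sum_eq_one, mul_one]

lemma tv_sum_mul_le {P Q : X → ℝ} {K K' : X → Y → ℝ} (hP : 0 ≤ P) (hK' : IsStochastic K') :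
    tv (fun y => ∑ x, P x * K x y) (fun y => ∑ x, Q x * K' x y)
      ≤ tv P Q + ∑ x, P x * tv (K x) (K' x) := by
  have hsplit : ∀ x y, |P x * K x y - Q x * K' x y|
      ≤ |P x - Q x| * K' x y + P x * |K x y - K' x y| := fun x y => by
    calc |P x * K x y - Q x * K' x y|
        = |(P x - Q x) * K' x y + P x * (K x y - K' x y)| := by ring_nf
      _ ≤ |P x - Q x| * K' x y + P x * |K x y - K' x y| := by
        refine (abs_add_le _ _).trans_eq ?_
        rw [abs_mul, abs_mul, abs_of_nonneg (hK'.nonneg x y), abs_of_nonneg (hP x)]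
  calc tv (fun y => ∑ x, P x * K x y) (fun y => ∑ x, Q x * K' x y)
      ≤ 1 / 2 * ∑ y, ∑ x, (|P x - Q x| * K' x y + P x * |K x y - K' x y|) := by
        refine mul_le_mul_of_nonneg_left (sum_le_sum fun y _ => ?_) (by norm_num)
        rw [← sum_sub_distrib]
        exact (abs_sum_le_sum_abs _ _).trans (sum_le_sum fun x _ => hsplit x y)
    _ = tv P Q + ∑ x, P x * tv (K x) (K' x) := by
        rw [sum_comm]
        simp only [sum_add_distrib, ← mul_sum, hK'.sum_eq_one, mul_one, tv,
          mul_left_comm _ (1 / 2 : ℝ)]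
        ring

end TotalVariation

section Occupancy

variable {S A : Type*} [Fintype S] [Fintype A]

def stepKernel (T : S × A → S → ℝ) (π : S → A → ℝ) (sa x : S × A) : ℝ :=
  T sa x.1 * π x.1 x.2

lemma sum_stepKernel {T : S × A → S → ℝ} {π : S → A → ℝ} (hT : ∀ sa, ∑ s, T sa s = 1)
    (hπ : ∀ s, ∑ a, π s a = 1) (sa : S × A) : ∑ x, stepKernel T π sa x = 1 := by
  simp only [stepKernel, Fintype.sum_prod_type, ← mul_sum, hπ, mul_one, hT]

lemma isStochastic_stepKernel {T : S × A → S → ℝ} {π : S → A → ℝ} (hT : IsStochastic T)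
    (hπ : IsStochastic π) : IsStochastic (stepKernel T π) := fun sa =>
  ⟨fun _ => mul_nonneg (hT.nonneg _ _) (hπ.nonneg _ _),
    sum_stepKernel hT.sum_eq_one hπ.sum_eq_one sa⟩

variable (μ0 : S → ℝ) (π : S → A → ℝ) (T : S × A → S → ℝ)

lemma occ_zero : occ μ0 π T 0 = fun sa => μ0 sa.1 * π sa.1 sa.2 := rfl

lemma occ_succ (t : ℕ) :
    occ μ0 π T (t + 1) = fun x => ∑ sa, occ μ0 π T t sa * stepKernel T π sa x := by
  funext x
  simp only [occ, stepKernel, mul_assoc]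

variable {μ0 π T}

lemma occ_nonneg (hμ0 : 0 ≤ μ0) (hπ : 0 ≤ π) (hT : 0 ≤ T) (t : ℕ) : 0 ≤ occ μ0 π T t := by
  induction t with
  | zero => exact fun sa => mul_nonneg (hμ0 _) (hπ _ _)
  | succ t ih =>
    rw [occ_succ]
    exact fun _ => sum_nonneg fun sa _ => mul_nonneg (ih sa) (mul_nonneg (hT _ _) (hπ _ _))

lemma sum_occ (hμ0 : ∑ s, μ0 s = 1) (hπ : ∀ s, ∑ a, π s a = 1) (hT : ∀ sa, ∑ s, T sa s = 1)
    (t : ℕ) : ∑ sa, occ μ0 π T t sa = 1 := by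
  induction t with
  | zero => simp only [occ_zero, Fintype.sum_prod_type, ← mul_sum, hπ, mul_one, hμ0]
  | succ t ih => rw [occ_succ, sum_comm]; simp only [← mul_sum, sum_stepKernel hT hπ, mul_one, ih]

lemma abs_sum_occ_mul_le (hμ0₀ : 0 ≤ μ0) (hμ0₁ : ∑ s, μ0 s = 1) (hπ : IsStochastic π)
    (hT : IsStochastic T) {r : S × A → ℝ} {C : ℝ} (hr : ∀ sa, |r sa| ≤ C) (t : ℕ) :
    |∑ sa, occ μ0 π T t sa * r sa| ≤ C :=
  abs_sum_mul_le (fun sa _ => occ_nonneg hμ0₀ hπ.nonneg hT.nonneg t sa)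
    (sum_occ hμ0₁ hπ.sum_eq_one hT.sum_eq_one t) fun sa _ => hr sa

end Occupancy

section OccupancyShift

variable {S A : Type*} [Fintype S] [Fintype A] {μ0 : S → ℝ} {π π' : S → A → ℝ}
  {T T' : S × A → S → ℝ} {ε : ℝ}

theorem tv_occ_policy_le (hμ0₀ : 0 ≤ μ0) (hμ0₁ : ∑ s, μ0 s = 1) (hπ : IsStochastic π)
    (hπ' : IsStochastic π') (hT : IsStochastic T) (hε : ∀ s, tv (π s) (π' s) ≤ ε) (t : ℕ) :
    tv (occ μ0 π T t) (occ μ0 π' T t) ≤ (t + 1) * ε := by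
  induction t with
  | zero =>
    rw [occ_zero, occ_zero, tv_joint_of_marginal_eq hμ0₀, Nat.cast_zero, zero_add, one_mul]
    exact sum_mul_le_of_le (fun s _ => hμ0₀ s) hμ0₁ fun s _ => hε s
  | succ t ih =>
    have hstep : ∀ sa, tv (stepKernel T π sa) (stepKernel T π' sa) ≤ ε := fun sa =>
      (tv_joint_of_marginal_eq (hT.nonneg sa) π π').trans_le
        (sum_mul_le_of_le (fun s _ => hT.nonneg sa s) (hT.sum_eq_one sa) fun s _ => hε s)
    rw [occ_succ, occ_succ]
    calc _ ≤ tv (occ μ0 π T t) (occ μ0 π' T t)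
          + ∑ sa, occ μ0 π T t sa * tv (stepKernel T π sa) (stepKernel T π' sa) :=
          tv_sum_mul_le (occ_nonneg hμ0₀ hπ.nonneg hT.nonneg t) (isStochastic_stepKernel hT hπ')
      _ ≤ (t + 1) * ε + ε :=
          add_le_add ih <| sum_mul_le_of_le (fun sa _ => occ_nonneg hμ0₀ hπ.nonneg hT.nonneg t sa)
            (sum_occ hμ0₁ hπ.sum_eq_one hT.sum_eq_one t) fun sa _ => hstep sa
      _ = ((t + 1 : ℕ) + 1) * ε := by push_cast; ring

theorem tv_occ_model_le (hμ0 : 0 ≤ μ0) (hπ : IsStochastic π) (hT : 0 ≤ T)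
    (hT' : IsStochastic T') (hε : ∀ t, ∑ sa, occ μ0 π T t sa * tv (T sa) (T' sa) ≤ ε)
    (t : ℕ) : tv (occ μ0 π T t) (occ μ0 π T' t) ≤ t * ε := by
  induction t with
  | zero => simp only [occ_zero, tv_self, Nat.cast_zero, zero_mul, le_refl]
  | succ t ih =>
    rw [occ_succ, occ_succ]
    calc _ ≤ tv (occ μ0 π T t) (occ μ0 π T' t)
          + ∑ sa, occ μ0 π T t sa * tv (stepKernel T π sa) (stepKernel T' π sa) :=
          tv_sum_mul_le (occ_nonneg hμ0 hπ.nonneg hT t) (isStochastic_stepKernel hT' hπ)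
      _ = tv (occ μ0 π T t) (occ μ0 π T' t) + ∑ sa, occ μ0 π T t sa * tv (T sa) (T' sa) :=
          congrArg _ <| sum_congr rfl fun sa _ =>
            congrArg _ (tv_joint_of_kernel_eq hπ (T sa) (T' sa))
      _ ≤ t * ε + ε := add_le_add ih (hε t)
      _ = (t + 1 : ℕ) * ε := by push_cast; ring

theorem abs_sum_occ_mul_sub_le (hμ0₀ : 0 ≤ μ0) (hμ0₁ : ∑ s, μ0 s = 1)
    (hπ : IsStochastic π) (hπ' : IsStochastic π') (hT : IsStochastic T) (hT' : IsStochastic T')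
    {r r' : S × A → ℝ} {C εr εm επ : ℝ} (hC : 0 ≤ C) (hr : ∀ sa, |r sa| ≤ C)
    (hr' : ∀ sa, |r' sa| ≤ C)
    (hεr : ∀ t, ∑ sa, occ μ0 π' T t sa * |r sa - r' sa| ≤ εr)
    (hεm : ∀ t, ∑ sa, occ μ0 π' T t sa * tv (T sa) (T' sa) ≤ εm)
    (hεπ : ∀ s, tv (π s) (π' s) ≤ επ) (t : ℕ) :
    |∑ sa, occ μ0 π T t sa * r sa - ∑ sa, occ μ0 π T' t sa * r' sa|
      ≤ εr + 2 * C * (2 * (t + 1) * επ + t * εm) := by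
  have hpolicy := abs_sum_mul_sub_sum_mul_le (F := univ) (p := occ μ0 π T t)
    (q := occ μ0 π' T t) fun sa _ => hr sa
  have hpolicy' := abs_sum_mul_sub_sum_mul_le (F := univ) (p := occ μ0 π T' t)
    (q := occ μ0 π' T' t) fun sa _ => hr' sa
  have hmodel := abs_sum_mul_sub_sum_mul_le (F := univ) (p := occ μ0 π' T t)
    (q := occ μ0 π' T' t) fun sa _ => hr' sa
  have hreward : |∑ sa, occ μ0 π' T t sa * r sa - ∑ sa, occ μ0 π' T t sa * r' sa| ≤ εr := by
    rw [← sum_sub_distrib]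
    refine (abs_sum_le_sum_abs _ _).trans ((sum_congr rfl fun sa _ => ?_).trans_le (hεr t))
    rw [← mul_sub, abs_mul, abs_of_nonneg (occ_nonneg hμ0₀ hπ'.nonneg hT.nonneg t sa)]
  have hpolicy_tv := mul_le_mul_of_nonneg_left
    (tv_occ_policy_le hμ0₀ hμ0₁ hπ hπ' hT hεπ t) (by positivity : (0 : ℝ) ≤ 2 * C)
  have hpolicy_tv' := mul_le_mul_of_nonneg_left
    (tv_occ_policy_le hμ0₀ hμ0₁ hπ hπ' hT' hεπ t) (by positivity : (0 : ℝ) ≤ 2 * C)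
  have hmodel_tv := mul_le_mul_of_nonneg_left
    (tv_occ_model_le hμ0₀ hπ' hT.nonneg hT' hεm t) (by positivity : (0 : ℝ) ≤ 2 * C)
  rw [tvOn_univ] at hpolicy hpolicy' hmodel
  rw [abs_le] at hpolicy hpolicy' hmodel hreward ⊢
  constructor <;> linarith

end OccupancyShift

section Discounting

variable {γ : ℝ}

lemma summable_pow_mul_of_abs_le (hγ0 : 0 ≤ γ) (hγ1 : γ < 1) {f : ℕ → ℝ} {M : ℝ}
    (hf : ∀ t, |f t| ≤ M) : Summable fun t => γ ^ t * f t :=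
  ((summable_geometric_of_lt_one hγ0 hγ1).mul_left M).of_norm_bounded fun t => by
    rw [Real.norm_eq_abs, abs_mul, abs_of_nonneg (pow_nonneg hγ0 t), mul_comm]
    exact mul_le_mul_of_nonneg_right (hf t) (pow_nonneg hγ0 t)

/-- The constants are `∑ γ ^ t = 1 / (1 - γ)` and `∑ t γ ^ t = γ / (1 - γ) ^ 2`. -/
lemma tsum_pow_mul_sub_le (hγ0 : 0 ≤ γ) (hγ1 : γ < 1) {f g : ℕ → ℝ} {M c a b : ℝ}
    (hf : ∀ t, |f t| ≤ M) (hg : ∀ t, |g t| ≤ M) (hfg : ∀ t, g t - f t ≤ c * (a + b * t)) :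
    ∑' t, γ ^ t * g t - c * (a / (1 - γ) + γ * b / (1 - γ) ^ 2) ≤ ∑' t, γ ^ t * f t := by
  have hγ : ‖γ‖ < 1 := by rwa [Real.norm_eq_abs, abs_of_nonneg hγ0]
  have hbound : HasSum (fun t : ℕ => c * (a * γ ^ t + b * (t * γ ^ t)))
      (c * (a / (1 - γ) + γ * b / (1 - γ) ^ 2)) := by
    rw [show a / (1 - γ) + γ * b / (1 - γ) ^ 2 = a * (1 - γ)⁻¹ + b * (γ / (1 - γ) ^ 2) by ring]
    exact (((hasSum_geometric_of_lt_one hγ0 hγ1).mul_left a).add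
      ((hasSum_coe_mul_geometric_of_norm_lt_one hγ).mul_left b)).mul_left c
  rw [sub_le_iff_le_add, ← hbound.tsum_eq,
    ← (summable_pow_mul_of_abs_le hγ0 hγ1 hf).tsum_add hbound.summable]
  refine (summable_pow_mul_of_abs_le hγ0 hγ1 hg).tsum_le_tsum (fun t => ?_)
    ((summable_pow_mul_of_abs_le hγ0 hγ1 hf).add hbound.summable)
  have := mul_le_mul_of_nonneg_left (hfg t) (pow_nonneg hγ0 t)
  linarith

end Discounting

/-- Main theorem: the return of the evaluating policy π in the true environment is at
least its return in the learned world model minus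
2·r_max·((ε_r + 2·ε_π)/(1−γ) + γ·(2·ε_π + ε_m)/(1−γ)²). -/
theorem return_gap_main
    {S A : Type*} [Fintype S] [Fintype A] [Nonempty S] [Nonempty A]
    (γ : ℝ) (hγ0 : 0 ≤ γ) (hγ1 : γ < 1)
    (μ0 : S → ℝ) (hμ0 : (∀ s, 0 ≤ μ0 s) ∧ ∑ s, μ0 s = 1)
    (T That : S × A → S → ℝ)
    (hT : ∀ sa, (∀ s', 0 ≤ T sa s') ∧ ∑ s', T sa s' = 1)
    (hThat : ∀ sa, (∀ s', 0 ≤ That sa s') ∧ ∑ s', That sa s' = 1)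
    (Rset : Finset ℝ) (rmax : ℝ)
    (hbound : ∀ ρ ∈ Rset, |ρ| ≤ rmax)
    (R Rhat : S × A → ℝ → ℝ)
    (hR : ∀ sa, (∀ ρ ∈ Rset, 0 ≤ R sa ρ) ∧ ∑ ρ ∈ Rset, R sa ρ = 1)
    (hRhat : ∀ sa, (∀ ρ ∈ Rset, 0 ≤ Rhat sa ρ) ∧ ∑ ρ ∈ Rset, Rhat sa ρ = 1)
    (π πD : S → A → ℝ)
    (hπ : ∀ s, (∀ a, 0 ≤ π s a) ∧ ∑ a, π s a = 1)
    (hπD : ∀ s, (∀ a, 0 ≤ πD s a) ∧ ∑ a, πD s a = 1)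
    (εr εm επ : ℝ)
    (hεr : ∀ t, ∑ sa : S × A, occ μ0 πD T t sa * tvOn Rset (R sa) (Rhat sa) ≤ εr)
    (hεm : ∀ t, ∑ sa : S × A, occ μ0 πD T t sa * tv (T sa) (That sa) ≤ εm)
    (hεπ : Finset.univ.sup' Finset.univ_nonempty (fun s => tv (π s) (πD s)) ≤ επ) :
    (∑' t : ℕ, γ ^ t * ∑ sa : S × A, occ μ0 π T t sa * ∑ ρ ∈ Rset, ρ * R sa ρ)
      ≥ (∑' t : ℕ, γ ^ t * ∑ sa : S × A, occ μ0 π That t sa * ∑ ρ ∈ Rset, ρ * Rhat sa ρ)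
        - 2 * rmax * ((εr + 2 * επ) / (1 - γ) + γ * (2 * επ + εm) / (1 - γ) ^ 2) := by
  obtain ⟨hμ0₀, hμ0₁⟩ := hμ0
  have hrmax : 0 ≤ rmax := by
    obtain ⟨ρ, hρ⟩ : Rset.Nonempty :=
      nonempty_of_sum_ne_zero ((hR (Classical.arbitrary _)).2 ▸ one_ne_zero)
    exact (abs_nonneg ρ).trans (hbound ρ hρ)
  have hr : ∀ sa, |∑ ρ ∈ Rset, ρ * R sa ρ| ≤ rmax := fun sa =>
    abs_mean_le hbound (hR sa).1 (hR sa).2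
  have hr' : ∀ sa, |∑ ρ ∈ Rset, ρ * Rhat sa ρ| ≤ rmax := fun sa =>
    abs_mean_le hbound (hRhat sa).1 (hRhat sa).2
  have hεr' : ∀ t, ∑ sa, occ μ0 πD T t sa
      * |∑ ρ ∈ Rset, ρ * R sa ρ - ∑ ρ ∈ Rset, ρ * Rhat sa ρ| ≤ 2 * rmax * εr := fun t =>
    calc _ ≤ ∑ sa, occ μ0 πD T t sa * (2 * rmax * tvOn Rset (R sa) (Rhat sa)) :=
          sum_le_sum fun sa _ => mul_le_mul_of_nonneg_left (abs_mean_sub_mean_le hbound)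
            (occ_nonneg hμ0₀ (IsStochastic.nonneg hπD) (IsStochastic.nonneg hT) t sa)
      _ ≤ 2 * rmax * εr := by
          simpa only [mul_left_comm _ (2 * rmax), ← mul_sum] using
            mul_le_mul_of_nonneg_left (hεr t) (by positivity : (0 : ℝ) ≤ 2 * rmax)
  have hεπ' : ∀ s, tv (π s) (πD s) ≤ επ := fun s => (le_sup' _ (mem_univ s)).trans hεπ
  refine tsum_pow_mul_sub_le hγ0 hγ1 (abs_sum_occ_mul_le hμ0₀ hμ0₁ hπ hT hr)
    (abs_sum_occ_mul_le hμ0₀ hμ0₁ hπ hThat hr') fun t => ?_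
  have := abs_sum_occ_mul_sub_le hμ0₀ hμ0₁ hπ hπD hT hThat hrmax hr hr' hεr' hεm hεπ' t
  rw [abs_sub_comm, abs_le] at this
  linarith
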